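/- A rational group A (additive subgroup of ℚ containing 1) is isomorphic to ℤ if and only if the set of primes p with h_p(A) ≥ 1 is finite and h_p(A) < ∞ for all primes p. -/

import Mathlib

/-- The p-height of a subgroup `A` of `ℚ`. -/
noncomputable def ratHeight (A : AddSubgroup ℚ) (p : ℕ) : ℕ∞ :=
  ⨆ n ∈ {n : ℕ | (1 : ℚ) / p ^ n ∈ A}, (n : ℕ∞)

/-!
A subgroup of `ℚ` containing `1` is infinite cyclic exactly when its denominators are bounded,
i.e. when it lies in `(1/N)ℤ` for some `N ≠ 0`: a cyclic group `⟨g⟩` lies in `(1/g.den)ℤ`, and a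
nontrivial subgroup of the cyclic group `(1/N)ℤ` is infinite cyclic. If `A ≤ (1/N)ℤ`, then
`1/p^n ∈ A` forces `p^n ∣ N`, so `h_p(A)` is at most the `p`-adic valuation of `N`. Conversely,
Bézout gives `1/x.den ∈ A` for every `x ∈ A`, so each prime power `p^k` dividing a denominator has
`1/p^k ∈ A`, i.e. `k ≤ h_p(A)`; hence every denominator divides `∏ p ^ h_p(A)`, the product over
the finitely many primes of positive height.
-/

open AddSubgroup

lemma Rat.mem_zmultiples_one_div_iff {N : ℕ} (hN : N ≠ 0) {x : ℚ} :
    x ∈ zmultiples (1 / N : ℚ) ↔ x.den ∣ N := by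
  rw [mem_zmultiples_iff]
  constructor
  · rintro ⟨k, rfl⟩
    rw [zsmul_eq_mul, mul_one_div, ← Int.cast_natCast, Rat.intCast_div_eq_divInt]
    exact_mod_cast Rat.den_dvd k N
  · rintro ⟨c, hc⟩
    refine ⟨x.num * c, ?_⟩
    have hden : (x.den : ℚ) ≠ 0 := by exact_mod_cast x.den_ne_zero
    have hc0 : (c : ℚ) ≠ 0 := by exact_mod_cast right_ne_zero_of_mul (hc ▸ hN)
    rw [zsmul_eq_mul, hc]
    push_cast
    rw [← Rat.mul_den_eq_num]
    field_simp

lemma AddSubgroup.one_div_den_mem {A : AddSubgroup ℚ} (h1 : (1 : ℚ) ∈ A) {x : ℚ} (hx : x ∈ A) :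
    1 / (x.den : ℚ) ∈ A := by
  obtain ⟨u, v, huv⟩ : IsCoprime x.num x.den := Int.isCoprime_iff_gcd_eq_one.mpr x.reduced
  have hbezout : 1 / (x.den : ℚ) = u • x + v • 1 := by
    have hden : (x.den : ℚ) ≠ 0 := by exact_mod_cast x.den_ne_zero
    have huv' : (u : ℚ) * (x * x.den) + v * x.den = 1 := by
      rw [Rat.mul_den_eq_num]
      exact_mod_cast huv
    rw [zsmul_eq_mul, zsmul_eq_mul]
    field_simp
    linear_combination -huv'
  rw [hbezout]
  exact A.add_mem (A.zsmul_mem hx u) (A.zsmul_mem h1 v)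

lemma AddSubgroup.one_div_mem_of_dvd {A : AddSubgroup ℚ} {b d : ℕ} (hb : 1 / (b : ℚ) ∈ A)
    (hd : d ∣ b) (hb0 : b ≠ 0) : 1 / (d : ℚ) ∈ A := by
  obtain ⟨c, rfl⟩ := hd
  have hc : (c : ℚ) ≠ 0 := by exact_mod_cast right_ne_zero_of_mul hb0
  have : 1 / (d : ℚ) = c • (1 / ((d * c : ℕ) : ℚ)) := by
    rw [nsmul_eq_mul]
    push_cast
    field_simp
  rw [this]
  exact A.nsmul_mem hb c

lemma AddSubgroup.exists_le_zmultiples_one_div_of_addEquiv_int {A : AddSubgroup ℚ}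
    (e : A ≃+ ℤ) : ∃ N : ℕ, N ≠ 0 ∧ A ≤ zmultiples (1 / N : ℚ) := by
  have : IsAddCyclic A := isAddCyclic_of_surjective e.symm e.symm.surjective
  obtain ⟨g, hg⟩ := IsAddCyclic.exists_generator (α := A)
  refine ⟨(g : ℚ).den, (g : ℚ).den_ne_zero, fun x hx => ?_⟩
  obtain ⟨k, hk⟩ := mem_zmultiples_iff.mp (hg ⟨x, hx⟩)
  rw [← show ((k • g : A) : ℚ) = x from congrArg Subtype.val hk, coe_zsmul]
  exact zsmul_mem ((Rat.mem_zmultiples_one_div_iff (g : ℚ).den_ne_zero).mpr dvd_rfl) k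

lemma AddSubgroup.nonempty_addEquiv_int_of_le_zmultiples {A : AddSubgroup ℚ} {q : ℚ}
    (h1 : (1 : ℚ) ∈ A) (hA : A ≤ zmultiples q) : Nonempty (A ≃+ ℤ) := by
  have : IsAddCyclic A := isAddCyclic_of_le hA
  have : Infinite A := Infinite.of_injective (fun n : ℤ => n • (⟨1, h1⟩ : A)) fun m n h => by
    simpa using congrArg Subtype.val h
  exact ⟨intCyclicAddEquiv.symm⟩

lemma le_ratHeight {A : AddSubgroup ℚ} {p n : ℕ} (h : (1 : ℚ) / p ^ n ∈ A) :
    (n : ℕ∞) ≤ ratHeight A p :=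
  le_biSup _ h

lemma ratHeight_le {A : AddSubgroup ℚ} {p : ℕ} {N : ℕ∞}
    (h : ∀ n : ℕ, (1 : ℚ) / p ^ n ∈ A → (n : ℕ∞) ≤ N) : ratHeight A p ≤ N :=
  iSup₂_le h

lemma ratHeight_le_factorization {A : AddSubgroup ℚ} {N p : ℕ} (hN : N ≠ 0)
    (hA : A ≤ zmultiples (1 / N : ℚ)) (hp : p.Prime) : ratHeight A p ≤ N.factorization p := by
  refine ratHeight_le fun n hn => ?_
  have hden : ((1 : ℚ) / p ^ n).den = p ^ n := by
    rw [one_div, ← Nat.cast_pow, Rat.inv_natCast_den_of_pos (pow_pos hp.pos n)]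
  have hdvd := (Rat.mem_zmultiples_one_div_iff hN).mp (hA hn)
  rw [hden] at hdvd
  exact_mod_cast (hp.pow_dvd_iff_le_factorization hN).mp hdvd

lemma den_dvd_prod_pow_ratHeight {A : AddSubgroup ℚ} (h1 : (1 : ℚ) ∈ A)
    (hfin : {p : ℕ | p.Prime ∧ 1 ≤ ratHeight A p}.Finite)
    (htop : ∀ p : ℕ, p.Prime → ratHeight A p ≠ ⊤) {x : ℚ} (hx : x ∈ A) :
    x.den ∣ ∏ p ∈ hfin.toFinset, p ^ (ratHeight A p).toNat := by
  refine (Nat.dvd_iff_prime_pow_dvd_dvd _ _).mpr fun p k hp hpk => ?_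
  obtain rfl | hk := k.eq_zero_or_pos
  · exact (pow_zero p).symm ▸ one_dvd _
  have hmem : (1 : ℚ) / p ^ k ∈ A := by
    exact_mod_cast one_div_mem_of_dvd (one_div_den_mem h1 hx) hpk x.den_ne_zero
  have hkh : (k : ℕ∞) ≤ ratHeight A p := le_ratHeight hmem
  have hP : p ∈ hfin.toFinset :=
    hfin.mem_toFinset.mpr ⟨hp, le_trans (by exact_mod_cast hk) hkh⟩
  calc p ^ k ∣ p ^ (ratHeight A p).toNat :=
        pow_dvd_pow p (by simpa using ENat.toNat_le_toNat hkh (htop p hp))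
    _ ∣ _ := Finset.dvd_prod_of_mem (fun q => q ^ (ratHeight A q).toNat) hP

/-- A rational group `A` (subgroup of `ℚ` containing 1) is isomorphic to `ℤ`
iff only finitely many primes have positive height and no height is infinite. -/
theorem rational_group_iso_int_iff (A : AddSubgroup ℚ) (h1 : (1 : ℚ) ∈ A) :
    Nonempty (A ≃+ ℤ) ↔
      {p : ℕ | p.Prime ∧ 1 ≤ ratHeight A p}.Finite ∧
        ∀ p : ℕ, p.Prime → ratHeight A p ≠ ⊤ := by
  constructor
  · rintro ⟨e⟩
    obtain ⟨N, hN, hA⟩ := exists_le_zmultiples_one_div_of_addEquiv_int e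
    have hle (p : ℕ) (hp : p.Prime) := ratHeight_le_factorization hN hA hp
    refine ⟨N.primeFactors.finite_toSet.subset fun p ⟨hp, h⟩ => ?_,
      fun p hp => ne_top_of_le_ne_top (ENat.natCast_ne_top _) (hle p hp)⟩
    have hpos : 1 ≤ N.factorization p := by exact_mod_cast h.trans (hle p hp)
    rw [← Nat.support_factorization]
    exact Finsupp.mem_support_iff.mpr (by omega)
  · rintro ⟨hfin, htop⟩
    have hN : ∏ p ∈ hfin.toFinset, p ^ (ratHeight A p).toNat ≠ 0 :=
      Finset.prod_ne_zero_iff.mpr fun p hp => pow_ne_zero _ (hfin.mem_toFinset.mp hp).1.ne_zero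
    exact nonempty_addEquiv_int_of_le_zmultiples h1 fun x hx =>
      (Rat.mem_zmultiples_one_div_iff hN).mpr (den_dvd_prod_pow_ratHeight h1 hfin htop hx)
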